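/- arXiv:2211.06352 — 4 statements merged into one kernel-verified Lean document; each statement's English description precedes it below -/
import Mathlib

section
/- Let λ_1 = 1 ≥ λ_2 ≥ ... ≥ λ_n be real numbers with |λ_i| ≤ 1 for all i and ∑_i λ_i = 0. If ∑_i λ_i³ ≥ (1 - 1/(n-1)) ∑_i λ_i², then λ_i = -1/(n-1) for all i > 1. -/
theorem stmt_0 (n : ℕ) (lam : Fin n → ℝ) (hn : 0 < n)
    (h1 : lam ⟨0, hn⟩ = 1) (hmono : Antitone lam)
    (hbd : ∀ i, |lam i| ≤ 1) (hsum : ∑ i, lam i = 0)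
    (hcube : ∑ i, (lam i) ^ 3 ≥ (1 - 1 / ((n : ℝ) - 1)) * ∑ i, (lam i) ^ 2) :
    ∀ i : Fin n, i ≠ ⟨0, hn⟩ → lam i = -1 / ((n : ℝ) - 1) := by
  intro i hi
  -- n ≥ 2
  have hn2 : 2 ≤ n := by
    by_contra h
    push_neg at h
    have hn1 : n = 1 := by omega
    subst hn1
    exact hi (Fin.ext (by omega))
  set m : ℝ := (n : ℝ) - 1 with hm_def
  have hm1 : (1 : ℝ) ≤ m := by
    have : (2 : ℝ) ≤ (n : ℝ) := by exact_mod_cast hn2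
    simp [hm_def]; linarith
  have hm0 : (0 : ℝ) < m := by linarith
  have hmn : (n : ℝ) = m + 1 := by simp [hm_def]
  set F : ℝ → ℝ := fun x => (x + 1/m)^2 * (1 + 1/m - x) with hF_def
  have hF : ∀ x : ℝ, F x = -(x^3) + (1 - 1/m) * x^2 + (2/m + 1/m^2) * x + (1/m^2 + 1/m^3) := by
    intro x
    have hm0' : m ≠ 0 := ne_of_gt hm0
    simp only [hF_def]
    field_simp
    ring
  have hFsum : ∑ j, F (lam j)
      = -(∑ j, (lam j) ^ 3) + (1 - 1/m) * (∑ j, (lam j) ^ 2)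
        + (2/m + 1/m^2) * (∑ j, lam j) + (n : ℝ) * (1/m^2 + 1/m^3) := by
    simp_rw [hF]
    rw [Finset.sum_add_distrib, Finset.sum_add_distrib, Finset.sum_add_distrib,
        ← Finset.sum_neg_distrib, ← Finset.mul_sum, ← Finset.mul_sum,
        Finset.sum_const, Finset.card_univ, Fintype.card_fin, nsmul_eq_mul]
  have hsumle : ∑ j, F (lam j) ≤ (n : ℝ) * (1/m^2 + 1/m^3) := by
    rw [hFsum, hsum]
    have := hcube
    linarith
  have hF1 : F 1 = (n : ℝ) * (1/m^2 + 1/m^3) := by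
    simp only [hF_def]
    rw [hmn]
    field_simp
    ring
  have hsplit := Finset.add_sum_erase Finset.univ (fun j => F (lam j))
    (Finset.mem_univ (⟨0, hn⟩ : Fin n))
  have hFnonneg : ∀ j : Fin n, 0 ≤ F (lam j) := by
    intro j
    have hle : lam j ≤ 1 := (abs_le.mp (hbd j)).2
    have hpos : 0 < 1 + 1/m - lam j := by
      have : 0 < 1/m := by positivity
      linarith
    exact mul_nonneg (sq_nonneg _) hpos.le
  have herase_le : ∑ j ∈ Finset.univ.erase (⟨0, hn⟩ : Fin n), F (lam j) ≤ 0 := by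
    have : F (lam ⟨0, hn⟩) = (n : ℝ) * (1/m^2 + 1/m^3) := by rw [h1, hF1]
    linarith [hsumle, hsplit.symm ▸ hsumle]
  have herase_zero : ∑ j ∈ Finset.univ.erase (⟨0, hn⟩ : Fin n), F (lam j) = 0 :=
    le_antisymm herase_le (Finset.sum_nonneg fun j _ => hFnonneg j)
  have hall := (Finset.sum_eq_zero_iff_of_nonneg (fun j _ => hFnonneg j)).mp herase_zero
  have hFi : F (lam i) = 0 := hall i (Finset.mem_erase.mpr ⟨hi, Finset.mem_univ i⟩)
  have hle : lam i ≤ 1 := (abs_le.mp (hbd i)).2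
  have hpos : 0 < 1 + 1/m - lam i := by
    have : 0 < 1/m := by positivity
    linarith
  have hsq : (lam i + 1/m)^2 = 0 := by
    simp only [hF_def] at hFi
    rcases mul_eq_zero.mp hFi with h | h
    · exact h
    · linarith
  have : lam i + 1/m = 0 := by
    have := sq_eq_zero_iff.mp hsq
    exact this
  rw [neg_div]
  linarith
end

section
/- For a simple undirected graph G, the spectral transitivity τ = (∑_i λ_i³)/(∑_i λ_i²) of its normalized adjacency matrix satisfies τ = 3 ∑_{t ∈ T} wt(t) / ∑_{e ∈ E} wt(e), where wt((u,v)) = 1/(d_u d_v) and wt((u,v,w)) = 1/(d_u d_v d_w). -/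
noncomputable def normAdj {V : Type*} [Fintype V] (G : SimpleGraph V) [DecidableRel G.Adj] :
    Matrix V V ℝ :=
  fun u v => if G.Adj u v then (Real.sqrt ((G.degree u : ℝ) * (G.degree v : ℝ)))⁻¹ else 0

open Finset Matrix

lemma trace_pow_eq_sum_eigenvalues_pow {n : Type*} [Fintype n] [DecidableEq n]
    {A : Matrix n n ℝ} (hA : A.IsHermitian) (k : ℕ) :
    (A ^ k).trace = ∑ i, hA.eigenvalues i ^ k := by
  set u : Matrix n n ℝ := (hA.eigenvectorUnitary : Matrix n n ℝ) with hu
  have h1 : star u * u = 1 := mem_unitaryGroup_iff'.mp hA.eigenvectorUnitary.2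
  have h2 : u * star u = 1 := mem_unitaryGroup_iff.mp hA.eigenvectorUnitary.2
  set D : Matrix n n ℝ := Matrix.diagonal (RCLike.ofReal ∘ hA.eigenvalues) with hD
  have key : A ^ k = u * D ^ k * star u := by
    induction k with
    | zero => simp [h2]
    | succ m ih =>
      rw [pow_succ, ih, hA.spectral_theorem, Unitary.conjStarAlgAut_apply, ← hu, ← hD]
      simp only [Matrix.mul_assoc]
      rw [← Matrix.mul_assoc (star u) u, h1, Matrix.one_mul, pow_succ]
      simp only [Matrix.mul_assoc]
  rw [key, Matrix.trace_mul_cycle, h1, Matrix.one_mul, hD,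
    Matrix.diagonal_pow, Matrix.trace_diagonal]
  simp


set_option maxHeartbeats 1000000 in
lemma tri_fiber {V : Type*} [Fintype V] [DecidableEq V] (G : SimpleGraph V) [DecidableRel G.Adj]
    (a b c : V) (hab : G.Adj a b) (hac : G.Adj a c) (hbc : G.Adj b c) :
    (Finset.univ.filter
        (fun p : V × V × V => G.Adj p.1 p.2.1 ∧ G.Adj p.2.1 p.2.2 ∧ G.Adj p.1 p.2.2)).filter
        (fun p => ({p.1, p.2.1, p.2.2} : Finset V) = {a, b, c}) =
        ({(a, b, c), (a, c, b), (b, a, c), (b, c, a), (c, a, b), (c, b, a)} :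
          Finset (V × V × V)) := by
  ext ⟨x, y, z⟩
  simp only [Finset.mem_filter, Finset.mem_univ, true_and, Finset.mem_insert,
    Finset.mem_singleton, Prod.mk.injEq]
  constructor
  · rintro ⟨⟨hxy, hyz, hxz⟩, hset⟩
    have hx : x = a ∨ x = b ∨ x = c := by
      have : x ∈ ({a, b, c} : Finset V) := hset ▸ (by simp)
      simpa using this
    have hy : y = a ∨ y = b ∨ y = c := by
      have : y ∈ ({a, b, c} : Finset V) := hset ▸ (by simp)
      simpa using this
    have hz : z = a ∨ z = b ∨ z = c := by
      have : z ∈ ({a, b, c} : Finset V) := hset ▸ (by simp)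
      simpa using this
    have h1 := hxy.ne
    have h2 := hyz.ne
    have h3 := hxz.ne
    clear hset hxy hyz hxz
    rcases hx with rfl | rfl | rfl <;> rcases hy with rfl | rfl | rfl <;>
      rcases hz with rfl | rfl | rfl <;>
      first
        | exact absurd rfl h1 | exact absurd rfl h2 | exact absurd rfl h3
        | tauto
  · have hset : ∀ x y z : V, ({x, y, z} : Finset V) = ({a, b, c} : Finset V) ↔
        (∀ w, w = x ∨ w = y ∨ w = z ↔ w = a ∨ w = b ∨ w = c) := by
      intro x y z
      rw [Finset.ext_iff]
      simp
    rintro (⟨rfl, rfl, rfl⟩ | ⟨rfl, rfl, rfl⟩ | ⟨rfl, rfl, rfl⟩ | ⟨rfl, rfl, rfl⟩ |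
      ⟨rfl, rfl, rfl⟩ | ⟨rfl, rfl, rfl⟩) <;>
      refine ⟨⟨?_, ?_, ?_⟩, (hset _ _ _).mpr fun w => by tauto⟩ <;>
      first
        | exact hab | exact hab.symm | exact hac | exact hac.symm
        | exact hbc | exact hbc.symm

set_option maxHeartbeats 1000000 in
lemma tri_sum {V : Type*} [Fintype V] [DecidableEq V] (G : SimpleGraph V) [DecidableRel G.Adj]
    (d : V → ℝ) (a b c : V) (hab : G.Adj a b) (hac : G.Adj a c) (hbc : G.Adj b c) :
    ∑ p ∈ (Finset.univ.filter
        (fun p : V × V × V => G.Adj p.1 p.2.1 ∧ G.Adj p.2.1 p.2.2 ∧ G.Adj p.1 p.2.2)).filter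
        (fun p => ({p.1, p.2.1, p.2.2} : Finset V) = {a, b, c}),
        (d p.1 * d p.2.1 * d p.2.2)⁻¹
      = 6 * ((d a)⁻¹ * (d b)⁻¹ * (d c)⁻¹) := by
  rw [tri_fiber G a b c hab hac hbc]
  have hane : a ≠ b := hab.ne
  have hane2 : a ≠ c := hac.ne
  have hbne : b ≠ c := hbc.ne
  rw [Finset.sum_insert (by simp [Prod.ext_iff]; tauto),
    Finset.sum_insert (by simp [Prod.ext_iff]; tauto),
    Finset.sum_insert (by simp [Prod.ext_iff]; tauto),
    Finset.sum_insert (by simp [Prod.ext_iff]; tauto),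
    Finset.sum_insert (by simp [Prod.ext_iff]; tauto),
    Finset.sum_singleton]
  rw [mul_inv, mul_inv]
  ring

set_option maxHeartbeats 1000000 in
theorem stmt_7 {V : Type*} [Fintype V] [DecidableEq V] (G : SimpleGraph V) [DecidableRel G.Adj]
    (hd : ∀ v, 0 < G.degree v) (hE : (G.cliqueFinset 2).Nonempty)
    (hA : (normAdj G).IsHermitian) :
    (∑ i, (hA.eigenvalues i) ^ 3) / (∑ i, (hA.eigenvalues i) ^ 2) =
      3 * (∑ t ∈ G.cliqueFinset 3, ∏ v ∈ t, ((G.degree v : ℝ))⁻¹) /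
        (∑ e ∈ G.cliqueFinset 2, ∏ v ∈ e, ((G.degree v : ℝ))⁻¹) := by
  set d : V → ℝ := fun v => (G.degree v : ℝ) with hd'
  have hdpos : ∀ v, 0 < d v := fun v => Nat.cast_pos.mpr (hd v)
  set A := normAdj G with hAdef
  -- entry products
  have hsq : ∀ u v, A u v * A v u = if G.Adj u v then (d u * d v)⁻¹ else 0 := by
    intro u v
    by_cases h : G.Adj u v
    · rw [if_pos h]
      simp only [hAdef, normAdj, h, h.symm, if_true]
      rw [mul_comm (G.degree v : ℝ) (G.degree u : ℝ), ← mul_inv]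
      congr 1
      exact Real.mul_self_sqrt (by positivity)
    · simp only [hAdef, normAdj, h, if_neg, if_false, zero_mul, mul_zero]
  have hcube : ∀ u v w, A u v * A v w * A w u =
      if G.Adj u v ∧ G.Adj v w ∧ G.Adj u w then (d u * d v * d w)⁻¹ else 0 := by
    intro u v w
    by_cases h : G.Adj u v ∧ G.Adj v w ∧ G.Adj u w
    · obtain ⟨h1, h2, h3⟩ := h
      rw [if_pos ⟨h1, h2, h3⟩]
      simp only [hAdef, normAdj, h1, h2, h3.symm, if_true]
      rw [← mul_inv, ← mul_inv]
      congr 1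
      rw [← Real.sqrt_mul (by positivity), ← Real.sqrt_mul (by positivity)]
      rw [show (G.degree u : ℝ) * (G.degree v : ℝ) * ((G.degree v : ℝ) * (G.degree w : ℝ)) *
          ((G.degree w : ℝ) * (G.degree u : ℝ)) =
          ((G.degree u : ℝ) * (G.degree v : ℝ) * (G.degree w : ℝ)) ^ 2 by ring]
      exact Real.sqrt_sq (by positivity)
    · rw [if_neg h]
      simp only [hAdef, normAdj]
      by_cases h1 : G.Adj u v
      · by_cases h2 : G.Adj v w
        · have h3 : ¬ G.Adj u w := fun hc => h ⟨h1, h2, hc⟩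
          have h3' : ¬ G.Adj w u := fun hc => h3 hc.symm
          simp [h3']
        · simp [h2]
      · simp [h1]
  -- trace A^2
  have htr2 : (A ^ 2).trace = ∑ u, ∑ v, (if G.Adj u v then (d u * d v)⁻¹ else 0) := by
    rw [pow_two]
    simp only [Matrix.trace, Matrix.diag, Matrix.mul_apply]
    exact Finset.sum_congr rfl fun u _ => Finset.sum_congr rfl fun v _ => hsq u v
  have htr3 : (A ^ 3).trace = ∑ u, ∑ v, ∑ w,
      (if G.Adj u v ∧ G.Adj v w ∧ G.Adj u w then (d u * d v * d w)⁻¹ else 0) := by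
    rw [pow_succ, pow_two]
    simp only [Matrix.trace, Matrix.diag, Matrix.mul_apply, Finset.sum_mul]
    refine Finset.sum_congr rfl fun u _ => ?_
    rw [Finset.sum_comm]
    refine Finset.sum_congr rfl fun v _ => Finset.sum_congr rfl fun w _ => ?_
    rw [← hcube u v w]
  -- edge sum
  have hedge : ∑ u, ∑ v, (if G.Adj u v then (d u * d v)⁻¹ else 0)
      = 2 * ∑ e ∈ G.cliqueFinset 2, ∏ v ∈ e, (d v)⁻¹ := by
    have step1 : ∑ u, ∑ v, (if G.Adj u v then (d u * d v)⁻¹ else 0)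
        = ∑ p ∈ Finset.univ.filter (fun p : V × V => G.Adj p.1 p.2), (d p.1 * d p.2)⁻¹ := by
      simp only [Finset.sum_filter, Fintype.sum_prod_type]
    have hmaps : ∀ p ∈ Finset.univ.filter (fun p : V × V => G.Adj p.1 p.2),
        ({p.1, p.2} : Finset V) ∈ G.cliqueFinset 2 := by
      intro p hp
      rw [Finset.mem_filter] at hp
      rw [SimpleGraph.mem_cliqueFinset_iff]
      have hne := hp.2.ne
      refine ⟨?_, by rw [Finset.card_pair hne]⟩
      rw [Finset.coe_insert, Finset.coe_singleton]
      intro x hx y hy hxy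
      rcases hx with rfl | rfl <;> rcases hy with rfl | rfl <;>
        simp_all [hp.2, hp.2.symm]
    rw [step1]
    rw [← Finset.sum_fiberwise_of_maps_to hmaps (fun p => (d p.1 * d p.2)⁻¹)]
    · rw [Finset.mul_sum]
      refine Finset.sum_congr rfl fun e he => ?_
      rw [SimpleGraph.mem_cliqueFinset_iff] at he
      obtain ⟨a, b, hne, rfl⟩ := Finset.card_eq_two.mp he.card_eq
      have hab : G.Adj a b := he.isClique (by simp) (by simp) hne
      have hfib : (Finset.univ.filter (fun p : V × V => G.Adj p.1 p.2)).filter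
          (fun p => ({p.1, p.2} : Finset V) = {a, b}) = {(a, b), (b, a)} := by
        ext ⟨x, y⟩
        simp only [Finset.mem_filter, Finset.mem_univ, true_and, Finset.mem_insert,
          Finset.mem_singleton, Prod.mk.injEq]
        constructor
        · rintro ⟨hxy, hset⟩
          have hx : x = a ∨ x = b := by
            have : x ∈ ({a, b} : Finset V) := hset ▸ (by simp)
            simpa using this
          have hy : y = a ∨ y = b := by
            have : y ∈ ({a, b} : Finset V) := hset ▸ (by simp)
            simpa using this
          have hne' := hxy.ne
          rcases hx with rfl | rfl <;> rcases hy with rfl | rfl <;> simp_all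
        · rintro (⟨rfl, rfl⟩ | ⟨rfl, rfl⟩)
          · exact ⟨hab, rfl⟩
          · exact ⟨hab.symm, by rw [Finset.pair_comm]⟩
      rw [hfib, Finset.sum_pair (by simp [Prod.ext_iff, hne]),
        Finset.prod_pair hne, mul_inv]
      ring
  -- triangle sum
  have htri : ∑ u, ∑ v, ∑ w,
      (if G.Adj u v ∧ G.Adj v w ∧ G.Adj u w then (d u * d v * d w)⁻¹ else 0)
      = 6 * ∑ t ∈ G.cliqueFinset 3, ∏ v ∈ t, (d v)⁻¹ := by
    have step1 : ∑ u, ∑ v, ∑ w,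
        (if G.Adj u v ∧ G.Adj v w ∧ G.Adj u w then (d u * d v * d w)⁻¹ else 0)
        = ∑ p ∈ Finset.univ.filter
            (fun p : V × V × V => G.Adj p.1 p.2.1 ∧ G.Adj p.2.1 p.2.2 ∧ G.Adj p.1 p.2.2),
            (d p.1 * d p.2.1 * d p.2.2)⁻¹ := by
      simp only [Finset.sum_filter, Fintype.sum_prod_type]
    have hmaps : ∀ p ∈ Finset.univ.filter
        (fun p : V × V × V => G.Adj p.1 p.2.1 ∧ G.Adj p.2.1 p.2.2 ∧ G.Adj p.1 p.2.2),
        ({p.1, p.2.1, p.2.2} : Finset V) ∈ G.cliqueFinset 3 := by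
      intro p hp
      rw [Finset.mem_filter] at hp
      rw [SimpleGraph.mem_cliqueFinset_iff]
      exact SimpleGraph.is3Clique_triple_iff.mpr ⟨hp.2.1, hp.2.2.2, hp.2.2.1⟩
    rw [step1]
    rw [← Finset.sum_fiberwise_of_maps_to hmaps (fun p => (d p.1 * d p.2.1 * d p.2.2)⁻¹)]
    · rw [Finset.mul_sum]
      refine Finset.sum_congr rfl fun e he => ?_
      rw [SimpleGraph.mem_cliqueFinset_iff, SimpleGraph.is3Clique_iff] at he
      obtain ⟨a, b, c, hab, hac, hbc, rfl⟩ := he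
      rw [tri_sum G d a b c hab hac hbc]
      have hane : a ≠ b := hab.ne
      have hane2 : a ≠ c := hac.ne
      have hbne : b ≠ c := hbc.ne
      rw [Finset.prod_insert (by simp; tauto), Finset.prod_pair hbne]
      ring
  -- put it together
  have h2 := trace_pow_eq_sum_eigenvalues_pow hA 2
  have h3 := trace_pow_eq_sum_eigenvalues_pow hA 3
  rw [← h2, ← h3, htr2, htr3, hedge, htri]
  set E := ∑ e ∈ G.cliqueFinset 2, ∏ v ∈ e, (d v)⁻¹ with hEdef
  set T := ∑ t ∈ G.cliqueFinset 3, ∏ v ∈ t, (d v)⁻¹ with hTdef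
  have hEpos : 0 < E := by
    apply Finset.sum_pos
    · intro e he
      apply Finset.prod_pos
      intro v _
      exact inv_pos.mpr (hdpos v)
    · exact hE
  rw [div_eq_div_iff (by positivity) (by positivity)]
  ring
end

section
/- Let G be a simple undirected graph on n vertices with every vertex of degree at most n-1. If ∑_{(u,v) ∈ E} 2/(d_u d_v) = n/(n-1), then every vertex has degree exactly n-1, i.e., G is the n-clique. -/
open Finset

lemma filter_clique2_eq {V : Type*} [Fintype V] [DecidableEq V] (G : SimpleGraph V)
    [DecidableRel G.Adj] (v : V) :
    (G.cliqueFinset 2).filter (fun e => v ∈ e) =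
      (G.neighborFinset v).image (fun u => ({v, u} : Finset V)) := by
  ext e
  simp only [mem_filter, SimpleGraph.mem_cliqueFinset_iff, mem_image,
    SimpleGraph.mem_neighborFinset, SimpleGraph.isNClique_iff]
  constructor
  · rintro ⟨⟨hc, hcard⟩, hv⟩
    obtain ⟨a, b, hab, rfl⟩ := Finset.card_eq_two.1 hcard
    have hadj : G.Adj a b := hc (by simp) (by simp) hab
    rcases Finset.mem_insert.1 hv with rfl | hv
    · exact ⟨b, hadj, rfl⟩
    · simp only [Finset.mem_singleton] at hv
      subst hv
      exact ⟨a, hadj.symm, by rw [Finset.pair_comm]⟩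
  · rintro ⟨u, hadj, rfl⟩
    refine ⟨⟨?_, Finset.card_pair hadj.ne⟩, by simp⟩
    simpa using SimpleGraph.isClique_pair.2 fun _ => hadj

lemma card_clique2_filter {V : Type*} [Fintype V] [DecidableEq V] (G : SimpleGraph V)
    [DecidableRel G.Adj] (v : V) :
    ((G.cliqueFinset 2).filter (fun e => v ∈ e)).card = G.degree v := by
  rw [filter_clique2_eq]
  rw [Finset.card_image_of_injOn, SimpleGraph.card_neighborFinset_eq_degree]
  intro a ha b hb hab
  simp only at hab
  simp only [Finset.mem_coe, SimpleGraph.mem_neighborFinset] at ha hb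
  have : a ∈ ({v, b} : Finset V) := by rw [← hab]; simp
  rcases Finset.mem_insert.1 this with rfl | h
  · exact absurd rfl ha.ne'
  · simpa using h

lemma sum_over_edges {V : Type*} [Fintype V] [DecidableEq V] (G : SimpleGraph V)
    [DecidableRel G.Adj] (g : V → ℝ) :
    ∑ e ∈ G.cliqueFinset 2, ∑ v ∈ e, g v = ∑ v, (G.degree v : ℝ) * g v := by
  have : ∀ e ∈ G.cliqueFinset 2, ∑ v ∈ e, g v = ∑ v : V, if v ∈ e then g v else 0 := by
    intro e _
    rw [Finset.sum_ite_mem, Finset.univ_inter]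
  rw [Finset.sum_congr rfl this, Finset.sum_comm]
  refine Finset.sum_congr rfl fun v _ => ?_
  rw [← Finset.sum_filter, Finset.sum_const, ← card_clique2_filter G v]
  simp [mul_comm]

theorem stmt_8 {V : Type*} [Fintype V] [DecidableEq V] (G : SimpleGraph V) [DecidableRel G.Adj]
    (hd : ∀ v, 0 < G.degree v)
    (hmax : ∀ v, G.degree v ≤ Fintype.card V - 1)
    (hsum : ∑ e ∈ G.cliqueFinset 2, 2 * ∏ v ∈ e, ((G.degree v : ℝ))⁻¹ =
      (Fintype.card V : ℝ) / ((Fintype.card V : ℝ) - 1)) :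
    ∀ v, G.degree v = Fintype.card V - 1 := by
  intro v
  obtain ⟨u, hadjvu⟩ := (G.degree_pos_iff_exists_adj v).1 (hd v)
  have hn2 : 2 ≤ Fintype.card V := by
    have := Finset.card_le_card (Finset.insert_subset (Finset.mem_univ v)
      (Finset.singleton_subset_iff.2 (Finset.mem_univ u)))
    simpa [Finset.card_pair (G.ne_of_adj hadjvu)] using this
  set n := Fintype.card V with hn
  have hm : (0:ℝ) < (n:ℝ) - 1 := by
    have : (2:ℝ) ≤ (n:ℝ) := by exact_mod_cast hn2
    linarith
  have hdr : ∀ w, (0:ℝ) < (G.degree w : ℝ) := fun w => by exact_mod_cast hd w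
  have hmaxr : ∀ w, (G.degree w : ℝ) ≤ (n:ℝ) - 1 := by
    intro w
    have h1 := hmax w
    have : ((G.degree w : ℕ) : ℝ) ≤ ((n - 1 : ℕ) : ℝ) := by exact_mod_cast h1
    rwa [Nat.cast_sub (by omega), Nat.cast_one] at this
  set g : V → ℝ := fun w => ((G.degree w : ℝ) * ((n:ℝ) - 1))⁻¹ with hg
  have hB : ∑ e ∈ G.cliqueFinset 2, ∑ w ∈ e, g w = (n:ℝ) / ((n:ℝ) - 1) := by
    rw [sum_over_edges]
    have : ∀ w : V, (G.degree w : ℝ) * g w = ((n:ℝ) - 1)⁻¹ := by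
      intro w
      rw [hg]
      have := (hdr w).ne'
      field_simp
    rw [Finset.sum_congr rfl fun w _ => this w, Finset.sum_const, Finset.card_univ]
    rw [div_eq_mul_inv]
    simp [hn]
  have hpt : ∀ e ∈ G.cliqueFinset 2, ∑ w ∈ e, g w ≤ 2 * ∏ w ∈ e, ((G.degree w : ℝ))⁻¹ := by
    intro e he
    rw [SimpleGraph.mem_cliqueFinset_iff, SimpleGraph.isNClique_iff] at he
    obtain ⟨hc, hcard⟩ := he
    obtain ⟨a, b, hab, rfl⟩ := Finset.card_eq_two.1 hcard
    rw [Finset.sum_pair hab, Finset.prod_pair hab, hg]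
    have ha := hdr a; have hb := hdr b
    have ha' := ha.ne'; have hb' := hb.ne'; have hm' := hm.ne'
    have key : (G.degree a : ℝ) + (G.degree b : ℝ) ≤ 2 * ((n:ℝ) - 1) := by
      have := hmaxr a; have := hmaxr b; linarith
    calc ((G.degree a : ℝ) * ((n:ℝ)-1))⁻¹ + ((G.degree b : ℝ) * ((n:ℝ)-1))⁻¹
        = ((G.degree a : ℝ) + (G.degree b : ℝ)) /
          ((G.degree a : ℝ) * (G.degree b : ℝ) * ((n:ℝ)-1)) := by field_simp; ring
      _ ≤ 2 * ((n:ℝ)-1) / ((G.degree a : ℝ) * (G.degree b : ℝ) * ((n:ℝ)-1)) := by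
          gcongr
      _ = 2 * ((G.degree a : ℝ)⁻¹ * (G.degree b : ℝ)⁻¹) := by field_simp
  have heq := (Finset.sum_eq_sum_iff_of_le hpt).1 (by rw [hB, hsum])
  have hvu := G.ne_of_adj hadjvu
  have hve : ({v, u} : Finset V) ∈ G.cliqueFinset 2 := by
    rw [SimpleGraph.mem_cliqueFinset_iff, SimpleGraph.isNClique_iff]
    exact ⟨by simpa using SimpleGraph.isClique_pair.2 fun _ => hadjvu,
      Finset.card_pair hvu⟩
  have h2 := heq _ hve
  simp only [Finset.sum_pair hvu, Finset.prod_pair hvu, hg] at h2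
  have ha := hdr v; have hb := hdr u
  have ha' := ha.ne'; have hb' := hb.ne'; have hm' := hm.ne'
  have hdv : (G.degree v : ℝ) = (n:ℝ) - 1 := by
    by_contra hne
    have hlt : (G.degree v : ℝ) < (n:ℝ) - 1 := lt_of_le_of_ne (hmaxr v) hne
    have key : (G.degree v : ℝ) + (G.degree u : ℝ) < 2 * ((n:ℝ) - 1) := by
      have := hmaxr u; linarith
    have : ((G.degree v : ℝ) * ((n:ℝ)-1))⁻¹ + ((G.degree u : ℝ) * ((n:ℝ)-1))⁻¹ <
        2 * ((G.degree v : ℝ)⁻¹ * (G.degree u : ℝ)⁻¹) :=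
      calc ((G.degree v : ℝ) * ((n:ℝ)-1))⁻¹ + ((G.degree u : ℝ) * ((n:ℝ)-1))⁻¹
          = ((G.degree v : ℝ) + (G.degree u : ℝ)) /
            ((G.degree v : ℝ) * (G.degree u : ℝ) * ((n:ℝ)-1)) := by field_simp; ring
        _ < 2 * ((n:ℝ)-1) / ((G.degree v : ℝ) * (G.degree u : ℝ) * ((n:ℝ)-1)) := by
            gcongr
        _ = 2 * ((G.degree v : ℝ)⁻¹ * (G.degree u : ℝ)⁻¹) := by field_simp
    exact absurd h2 (ne_of_lt this)
  have : (G.degree v : ℝ) = ((n - 1 : ℕ) : ℝ) := by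
    rw [hdv, Nat.cast_sub (by omega), Nat.cast_one]
  exact_mod_cast this
end

section
/- Let ρ_1, ..., ρ_n be nonnegative reals with ∑_j ρ_j ≥ ε³/8 and ∑_j √ρ_j ≤ 2ε⁻¹√d for some ε ∈ (0,1] and d > 0. Let C be the smallest set of indices (taken in decreasing order of ρ) such that ∑_{j ∈ C} ρ_j ≥ (1/2) ∑_j ρ_j. Then |C| ≤ 144 ε⁻⁵ d. -/
/-!
Let `C` be the sweep cut of length `k`, `a = ρ_{k-1}` its smallest weight, and `T = ∑ √ρ_j`.
Every index of `C` has `√ρ_j ≥ √a`, so `k √a ≤ T`; every index from `k - 1` on has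
`ρ_j ≤ √a √ρ_j`, and by minimality of `C` these indices carry more than half the mass `S`, so
`S / 2 < √a T`. Hence `k S ≤ 2 T² ≤ 8 ε⁻² d`, and `S ≥ ε³ / 8` gives `k ≤ 64 ε⁻⁵ d`.
-/

open Finset

section SqrtWeights

variable {ι : Type*} [Fintype ι] {ρ : ι → ℝ}

lemma sum_le_sqrt_mul_sum_sqrt (hρ : ∀ j, 0 ≤ ρ j) {t : Finset ι} {a : ℝ}
    (ht : ∀ j ∈ t, ρ j ≤ a) : ∑ j ∈ t, ρ j ≤ √a * ∑ j, √(ρ j) :=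
  calc ∑ j ∈ t, ρ j
      = ∑ j ∈ t, √(ρ j) * √(ρ j) := sum_congr rfl fun j _ => (Real.mul_self_sqrt (hρ j)).symm
    _ ≤ ∑ j ∈ t, √a * √(ρ j) := sum_le_sum fun j hj =>
        mul_le_mul_of_nonneg_right (Real.sqrt_le_sqrt (ht j hj)) (Real.sqrt_nonneg _)
    _ = √a * ∑ j ∈ t, √(ρ j) := (mul_sum _ _ _).symm
    _ ≤ √a * ∑ j, √(ρ j) := mul_le_mul_of_nonneg_left
        (sum_le_sum_of_subset_of_nonneg (subset_univ t) fun _ _ _ => Real.sqrt_nonneg _)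
        (Real.sqrt_nonneg a)

lemma card_mul_sqrt_le_sum_sqrt {s : Finset ι} {a : ℝ} (hs : ∀ j ∈ s, a ≤ ρ j) :
    (#s : ℝ) * √a ≤ ∑ j, √(ρ j) :=
  calc (#s : ℝ) * √a
      = #s • √a := (nsmul_eq_mul _ _).symm
    _ ≤ ∑ j ∈ s, √(ρ j) := card_nsmul_le_sum _ _ _ fun j hj => Real.sqrt_le_sqrt (hs j hj)
    _ ≤ ∑ j, √(ρ j) :=
        sum_le_sum_of_subset_of_nonneg (subset_univ s) fun _ _ _ => Real.sqrt_nonneg _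

lemma card_mul_sum_le_sq_sum_sqrt (hρ : ∀ j, 0 ≤ ρ j) {s t : Finset ι} {a : ℝ}
    (hs : ∀ j ∈ s, a ≤ ρ j) (ht : ∀ j ∈ t, ρ j ≤ a) :
    (#s : ℝ) * ∑ j ∈ t, ρ j ≤ (∑ j, √(ρ j)) ^ 2 :=
  calc (#s : ℝ) * ∑ j ∈ t, ρ j
      ≤ #s * (√a * ∑ j, √(ρ j)) :=
        mul_le_mul_of_nonneg_left (sum_le_sqrt_mul_sum_sqrt hρ ht) (Nat.cast_nonneg _)
    _ = (#s * √a) * ∑ j, √(ρ j) := (mul_assoc _ _ _).symm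
    _ ≤ (∑ j, √(ρ j)) * ∑ j, √(ρ j) := mul_le_mul_of_nonneg_right
        (card_mul_sqrt_le_sum_sqrt hs) (sum_nonneg fun _ _ => Real.sqrt_nonneg _)
    _ = (∑ j, √(ρ j)) ^ 2 := (sq _).symm

end SqrtWeights

lemma natCast_mul_sum_le_two_mul_sq_sum_sqrt {n : ℕ} {ρ : Fin n → ℝ} (hρ : ∀ j, 0 ≤ ρ j)
    (hmono : Antitone ρ) {k : ℕ} (hk : 0 < k)
    (hmin : ∑ j ∈ univ.filter (fun j : Fin n => (j : ℕ) < k - 1), ρ j < (1 / 2) * ∑ j, ρ j) :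
    (k : ℝ) * ∑ j, ρ j ≤ 2 * (∑ j, √(ρ j)) ^ 2 := by
  have hkn : k ≤ n := by
    by_contra! hnk
    have hall : univ.filter (fun j : Fin n => (j : ℕ) < k - 1) = univ :=
      filter_true_of_mem fun j _ => by omega
    rw [hall] at hmin
    linarith [sum_nonneg fun j (_ : j ∈ univ) => hρ j]
  let m : Fin n := ⟨k - 1, by omega⟩
  have hcard : #(univ.filter fun j : Fin n => (j : ℕ) < k) = k := by
    rw [Fin.card_filter_val_lt, min_eq_right hkn]
  have htail : (1 / 2) * ∑ j, ρ j
      < ∑ j ∈ univ.filter (fun j : Fin n => ¬ (j : ℕ) < k - 1), ρ j := by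
    linarith [sum_filter_add_sum_filter_not univ (fun j : Fin n => (j : ℕ) < k - 1) ρ]
  have hcut := card_mul_sum_le_sq_sum_sqrt (a := ρ m) hρ
    (s := univ.filter fun j : Fin n => (j : ℕ) < k)
    (t := univ.filter fun j : Fin n => ¬ (j : ℕ) < k - 1)
    (fun j hj => hmono (Fin.le_def.mpr (show (j : ℕ) ≤ k - 1 by
      simp only [mem_filter, mem_univ, true_and] at hj; omega)))
    (fun j hj => hmono (Fin.le_def.mpr (show k - 1 ≤ (j : ℕ) by
      simp only [mem_filter, mem_univ, true_and, not_lt] at hj; omega)))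
  rw [hcard] at hcut
  calc (k : ℝ) * ∑ j, ρ j
      = 2 * (k * ((1 / 2) * ∑ j, ρ j)) := by ring
    _ ≤ 2 * (k * ∑ j ∈ univ.filter (fun j : Fin n => ¬ (j : ℕ) < k - 1), ρ j) := by
        gcongr
    _ ≤ 2 * (∑ j, √(ρ j)) ^ 2 := by gcongr

theorem stmt_15_general (n : ℕ) (ρ : Fin n → ℝ) (ε d : ℝ)
    (hnn : ∀ j, 0 ≤ ρ j) (hmono : Antitone ρ)
    (hε : ε ∈ Set.Ioc (0 : ℝ) 1) (hd : 0 < d)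
    (hsum : ε ^ 3 / 8 ≤ ∑ j, ρ j)
    (hsqrt : ∑ j, Real.sqrt (ρ j) ≤ 2 * ε⁻¹ * Real.sqrt d)
    (k : ℕ)
    (hkmin : ∀ k' < k,
      ∑ j ∈ Finset.univ.filter (fun j : Fin n => (j : ℕ) < k'), ρ j < (1 / 2) * ∑ j, ρ j) :
    (k : ℝ) ≤ 144 * ε⁻¹ ^ 5 * d := by
  obtain ⟨hε0, -⟩ := hε
  rcases Nat.eq_zero_or_pos k with rfl | hk
  · simp only [Nat.cast_zero]; positivity
  have hcut := natCast_mul_sum_le_two_mul_sq_sum_sqrt hnn hmono hk (hkmin (k - 1) (by omega))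
  have hsq : (∑ j, √(ρ j)) ^ 2 ≤ 4 * ε⁻¹ ^ 2 * d :=
    calc (∑ j, √(ρ j)) ^ 2
        ≤ (2 * ε⁻¹ * √d) ^ 2 :=
          pow_le_pow_left₀ (sum_nonneg fun _ _ => Real.sqrt_nonneg _) hsqrt 2
      _ = 4 * ε⁻¹ ^ 2 * d := by rw [mul_pow, Real.sq_sqrt hd.le]; ring
  have hkε : (k : ℝ) * ε ^ 3 ≤ 64 * ε⁻¹ ^ 2 * d := by
    linarith [mul_le_mul_of_nonneg_left hsum (Nat.cast_nonneg k : (0 : ℝ) ≤ k)]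
  calc (k : ℝ) = (k * ε ^ 3) * ε⁻¹ ^ 3 := by field_simp
    _ ≤ (64 * ε⁻¹ ^ 2 * d) * ε⁻¹ ^ 3 := by gcongr
    _ = 64 * ε⁻¹ ^ 5 * d := by ring
    _ ≤ 144 * ε⁻¹ ^ 5 * d := by gcongr; norm_num

theorem stmt_15 (n : ℕ) (ρ : Fin n → ℝ) (ε d : ℝ)
    (hnn : ∀ j, 0 ≤ ρ j) (hmono : Antitone ρ)
    (hε : ε ∈ Set.Ioc (0 : ℝ) 1) (hd : 0 < d)
    (hsum : ε ^ 3 / 8 ≤ ∑ j, ρ j)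
    (hsqrt : ∑ j, Real.sqrt (ρ j) ≤ 2 * ε⁻¹ * Real.sqrt d)
    (k : ℕ)
    (hk : (1 / 2) * ∑ j, ρ j ≤ ∑ j ∈ Finset.univ.filter (fun j : Fin n => (j : ℕ) < k), ρ j)
    (hkmin : ∀ k' < k,
      ∑ j ∈ Finset.univ.filter (fun j : Fin n => (j : ℕ) < k'), ρ j < (1 / 2) * ∑ j, ρ j) :
    (k : ℝ) ≤ 144 * ε⁻¹ ^ 5 * d :=
  stmt_15_general n ρ ε d hnn hmono hε hd hsum hsqrt k hkmin
end
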